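/- Assume ‖φ‖_{∞,1} < ∞, f̃ is locally approximately linear on the closed s-neighborhood with constants K₁, K₂ > 0, and ‖f̃(0, ŷ(k), k)‖_∞ ≤ s for all k. If two consecutive Picard iterates satisfy ‖η_{(m)}‖_{∞,1} ≤ s and ‖η_{(m+1)}‖_{∞,1} ≤ s (and the relevant Picard-update series converge absolutely), then the successive differences contract: ‖η_{(m+2)} − η_{(m+1)}‖_{∞,1} ≤ ‖φ‖_{∞,1}·K₁·‖η_{(m+1)} − η_{(m)}‖_{∞,1}. -/

import Mathlib

/-!
Subtracting the two Picard updates, `η_(m+2) − η_(m+1)` is the convolution of `φ` with the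
shifted differences `d(j) = (f̃(η_(m+1)(j)) − Ã η_(m+1)(j)) − (f̃(η_(m)(j)) − Ã η_(m)(j))`.
An `ℓ¹`-bound `≤ s` puts every term into the closed `s`-ball, so local approximate linearity
applies with the same `ŷ(j)` on both sides; the `K₂`-term vanishes and
`‖d(j)‖_∞ ≤ K₁ ‖η_(m+1)(j) − η_(m)(j)‖_∞`. Young's inequality
`‖φ ⋆ d‖_{∞,1} ≤ ‖φ‖_{∞,1} ‖d‖_{∞,1}` for the discrete convolution finishes the proof.
-/

open Matrix

noncomputable section

/-- The matrix sequence `φ : ℤ → ℝ^{n×n}` of the stable inversion theory. -/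
def stabPhi {ns nu : ℕ} (As : Matrix (Fin ns) (Fin ns) ℝ)
    (Au : Matrix (Fin nu) (Fin nu) ℝ) :
    ℤ → Matrix (Fin ns ⊕ Fin nu) (Fin ns ⊕ Fin nu) ℝ := fun k =>
  if 0 < k then Matrix.fromBlocks (As ^ k.toNat) 0 0 0
  else if k = 0 then Matrix.fromBlocks 1 0 0 0
  else Matrix.fromBlocks 0 0 0 (-(Au⁻¹ ^ (-k).toNat))

/-- The operator norm induced by the vector `∞`-norm: the maximum absolute row sum. -/
def rowSumNorm {m n : Type*} [Fintype m] [Fintype n] (M : Matrix m n ℝ) : ℝ :=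
  ⨆ i, ∑ j, |M i j|

section RowSumNorm

variable {m n : Type*} [Fintype m] [Fintype n]

lemma rowSumNorm_nonneg (M : Matrix m n ℝ) : 0 ≤ rowSumNorm M :=
  Real.iSup_nonneg fun _ => Finset.sum_nonneg fun _ _ => abs_nonneg _

lemma norm_mulVec_le_rowSumNorm_mul (M : Matrix m n ℝ) (v : n → ℝ) :
    ‖M *ᵥ v‖ ≤ rowSumNorm M * ‖v‖ := by
  refine (pi_norm_le_iff_of_nonneg (mul_nonneg (rowSumNorm_nonneg M) (norm_nonneg v))).2
    fun i => ?_
  have hrow : ∑ j, |M i j| ≤ rowSumNorm M :=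
    le_ciSup (f := fun i => ∑ j, |M i j|) (Set.finite_range _).bddAbove i
  calc ‖(M *ᵥ v) i‖ = ‖∑ j, M i j * v j‖ := rfl
    _ ≤ ∑ j, ‖M i j * v j‖ := norm_sum_le _ _
    _ ≤ ∑ j, |M i j| * ‖v‖ := Finset.sum_le_sum fun j _ => by
        rw [norm_mul, Real.norm_eq_abs]
        exact mul_le_mul_of_nonneg_left (norm_le_pi_norm v j) (abs_nonneg _)
    _ = (∑ j, |M i j|) * ‖v‖ := (Finset.sum_mul _ _ _).symm
    _ ≤ rowSumNorm M * ‖v‖ := mul_le_mul_of_nonneg_right hrow (norm_nonneg v)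

end RowSumNorm

section Convolution

def subShear (G : Type*) [AddGroup G] : G × G ≃ G × G where
  toFun p := (p.1 - p.2, p.2)
  invFun p := (p.1 + p.2, p.2)
  left_inv p := by simp
  right_inv p := by simp

variable {G : Type*} [AddGroup G] {a b : G → ℝ}

lemma hasSum_mul_sub_prod (ha₀ : 0 ≤ a) (hb₀ : 0 ≤ b) (ha : Summable a) (hb : Summable b) :
    HasSum (fun p : G × G => a (p.1 - p.2) * b p.2) ((∑' i, a i) * ∑' j, b j) := by
  have hprod : HasSum (fun p : G × G => a p.1 * b p.2) ((∑' i, a i) * ∑' j, b j) :=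
    ha.hasSum.mul hb.hasSum (ha.mul_of_nonneg hb ha₀ hb₀)
  exact (subShear G).hasSum_iff.2 hprod

lemma summable_mul_sub (ha₀ : 0 ≤ a) (hb₀ : 0 ≤ b) (ha : Summable a) (hb : Summable b)
    (k : G) : Summable fun j => a (k - j) * b j :=
  (hasSum_mul_sub_prod ha₀ hb₀ ha hb).summable.prod_factor k

lemma hasSum_tsum_mul_sub (ha₀ : 0 ≤ a) (hb₀ : 0 ≤ b) (ha : Summable a) (hb : Summable b) :
    HasSum (fun k => ∑' j, a (k - j) * b j) ((∑' i, a i) * ∑' j, b j) :=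
  (hasSum_mul_sub_prod ha₀ hb₀ ha hb).prod_fiberwise fun k =>
    (summable_mul_sub ha₀ hb₀ ha hb k).hasSum

lemma summable_norm_tsum_mulVec_sub_and_le {ι : Type*} [Fintype ι]
    (Φ : G → Matrix ι ι ℝ) (v : G → ι → ℝ) (hΦ : Summable fun k => rowSumNorm (Φ k))
    (hb : Summable b) (hvb : ∀ j, ‖v j‖ ≤ b j) :
    (Summable fun k => ‖∑' j, Φ (k - j) *ᵥ v j‖) ∧
      ∑' k, ‖∑' j, Φ (k - j) *ᵥ v j‖ ≤ (∑' k, rowSumNorm (Φ k)) * ∑' j, b j := by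
  have hΦ₀ : 0 ≤ fun k => rowSumNorm (Φ k) := fun k => rowSumNorm_nonneg (Φ k)
  have hb₀ : 0 ≤ b := fun j => (norm_nonneg _).trans (hvb j)
  have hconv := hasSum_tsum_mul_sub hΦ₀ hb₀ hΦ hb
  have hpointwise : ∀ k, ‖∑' j, Φ (k - j) *ᵥ v j‖ ≤ ∑' j, rowSumNorm (Φ (k - j)) * b j :=
    fun k => tsum_of_norm_bounded (summable_mul_sub hΦ₀ hb₀ hΦ hb k).hasSum fun j =>
      (norm_mulVec_le_rowSumNorm_mul _ _).trans
        (mul_le_mul_of_nonneg_left (hvb j) (rowSumNorm_nonneg _))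
  have hsummable : Summable fun k => ‖∑' j, Φ (k - j) *ᵥ v j‖ :=
    hconv.summable.of_nonneg_of_le (fun _ => norm_nonneg _) hpointwise
  exact ⟨hsummable, hconv.tsum_eq ▸ hsummable.tsum_le_tsum hpointwise hconv.summable⟩

end Convolution

lemma norm_le_of_tsum_norm_le {ι E : Type*} [SeminormedAddCommGroup E] {η : ι → E} {s : ℝ}
    (hη : Summable fun k => ‖η k‖) (hs : ∑' k, ‖η k‖ ≤ s) (j : ι) : ‖η j‖ ≤ s :=
  (hη.le_tsum j fun _ _ => norm_nonneg _).trans hs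

theorem picard_differences_contract_general
    (ns nu μ : ℕ)
    (As : Matrix (Fin ns) (Fin ns) ℝ) (Au : Matrix (Fin nu) (Fin nu) ℝ)
    (Atil : Matrix (Fin ns ⊕ Fin nu) (Fin ns ⊕ Fin nu) ℝ)
    (ftil : (Fin ns ⊕ Fin nu → ℝ) → (Fin (μ+1) → ℝ) → ℤ → (Fin ns ⊕ Fin nu → ℝ))
    (yhat : ℤ → (Fin (μ+1) → ℝ))
    (s K₁ K₂ : ℝ)
    -- ‖φ‖_{∞,1} < ∞
    (hφsum : Summable fun k : ℤ => rowSumNorm (stabPhi As Au k))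
    -- local approximate linearity on the closed s-neighborhood
    (hLAL : ∀ (k : ℤ) (a b : Fin ns ⊕ Fin nu → ℝ) (ya yb : Fin (μ+1) → ℝ),
      ‖a‖ ≤ s → ‖b‖ ≤ s → ‖ftil 0 ya k‖ ≤ s → ‖ftil 0 yb k‖ ≤ s →
      ‖(ftil a ya k - Atil.mulVec a) - (ftil b yb k - Atil.mulVec b)‖
        ≤ K₁ * ‖a - b‖ + K₂ * ‖ftil 0 ya k - ftil 0 yb k‖)
    -- ‖f̃(0, ŷ(k), k)‖_∞ ≤ s for all k
    (hfbnd : ∀ k : ℤ, ‖ftil 0 (yhat k) k‖ ≤ s)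
    -- two consecutive iterates lie in the s-ball
    (ηm ηm1 ηm2 : ℤ → (Fin ns ⊕ Fin nu → ℝ))
    (hηmsum : Summable fun k : ℤ => ‖ηm k‖)
    (hηm : (∑' k : ℤ, ‖ηm k‖) ≤ s)
    (hηm1sum : Summable fun k : ℤ => ‖ηm1 k‖)
    (hηm1bnd : (∑' k : ℤ, ‖ηm1 k‖) ≤ s)
    -- the relevant Picard-update series converge absolutely
    (habs1 : ∀ k : ℤ, Summable fun j : ℤ => ‖(stabPhi As Au (k - j)).mulVec
        (ftil (ηm (j-1)) (yhat (j-1)) (j-1) - Atil.mulVec (ηm (j-1)))‖)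
    (habs2 : ∀ k : ℤ, Summable fun j : ℤ => ‖(stabPhi As Au (k - j)).mulVec
        (ftil (ηm1 (j-1)) (yhat (j-1)) (j-1) - Atil.mulVec (ηm1 (j-1)))‖)
    -- the Picard updates
    (hηm1 : ∀ k : ℤ, ηm1 k = ∑' j : ℤ, (stabPhi As Au (k - j)).mulVec
        (ftil (ηm (j-1)) (yhat (j-1)) (j-1) - Atil.mulVec (ηm (j-1))))
    (hηm2 : ∀ k : ℤ, ηm2 k = ∑' j : ℤ, (stabPhi As Au (k - j)).mulVec
        (ftil (ηm1 (j-1)) (yhat (j-1)) (j-1) - Atil.mulVec (ηm1 (j-1)))) :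
    (Summable fun k : ℤ => ‖ηm2 k - ηm1 k‖) ∧
    (∑' k : ℤ, ‖ηm2 k - ηm1 k‖)
      ≤ (∑' k : ℤ, rowSumNorm (stabPhi As Au k)) * K₁ * (∑' k : ℤ, ‖ηm1 k - ηm k‖) := by
  set c : ℤ → ℝ := fun j => ‖ηm1 j - ηm j‖
  set d : ℤ → Fin ns ⊕ Fin nu → ℝ := fun j =>
    (ftil (ηm1 j) (yhat j) j - Atil *ᵥ ηm1 j) - (ftil (ηm j) (yhat j) j - Atil *ᵥ ηm j)
  have hd : ∀ j, ‖d (j - 1)‖ ≤ K₁ * c (j - 1) := fun j => by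
    simpa using hLAL (j - 1) _ _ _ _ (norm_le_of_tsum_norm_le hηm1sum hηm1bnd _)
      (norm_le_of_tsum_norm_le hηmsum hηm _) (hfbnd _) (hfbnd _)
  have hc : Summable fun j => K₁ * c (j - 1) :=
    ((Equiv.subRight 1).summable_iff.2 <|
      (hηm1sum.add hηmsum).of_nonneg_of_le (fun _ => norm_nonneg _) fun _ => norm_sub_le _ _).mul_left K₁
  have hdiff : ∀ k, ηm2 k - ηm1 k = ∑' j, stabPhi As Au (k - j) *ᵥ d (j - 1) := fun k => by
    rw [hηm2, hηm1, ← (habs2 k).of_norm.tsum_sub (habs1 k).of_norm]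
    simp only [d, mulVec_sub]
  obtain ⟨hsummable, hle⟩ := summable_norm_tsum_mulVec_sub_and_le _ _ hφsum hc hd
  simp only [← hdiff] at hsummable hle
  refine ⟨hsummable, hle.trans_eq ?_⟩
  have hshift : ∑' j, c (j - 1) = ∑' j, c j := (Equiv.subRight 1).tsum_eq c
  rw [tsum_mul_left, hshift, mul_assoc]

/-- Contraction of successive Picard differences:
`‖η_(m+2) − η_(m+1)‖_{∞,1} ≤ ‖φ‖_{∞,1} K₁ ‖η_(m+1) − η_(m)‖_{∞,1}`. -/
theorem picard_differences_contract
    (ns nu μ : ℕ) (hμ : 1 ≤ μ)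
    (As : Matrix (Fin ns) (Fin ns) ℝ) (Au : Matrix (Fin nu) (Fin nu) ℝ)
    (hAu : IsUnit Au.det)
    (Atil : Matrix (Fin ns ⊕ Fin nu) (Fin ns ⊕ Fin nu) ℝ)
    (hAtil : Atil = Matrix.fromBlocks As 0 0 Au)
    (ftil : (Fin ns ⊕ Fin nu → ℝ) → (Fin (μ+1) → ℝ) → ℤ → (Fin ns ⊕ Fin nu → ℝ))
    (yhat : ℤ → (Fin (μ+1) → ℝ))
    (s K₁ K₂ : ℝ) (hs : 0 < s) (hK₁ : 0 < K₁) (hK₂ : 0 < K₂)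
    -- ‖φ‖_{∞,1} < ∞
    (hφsum : Summable fun k : ℤ => rowSumNorm (stabPhi As Au k))
    -- local approximate linearity on the closed s-neighborhood
    (hLAL : ∀ (k : ℤ) (a b : Fin ns ⊕ Fin nu → ℝ) (ya yb : Fin (μ+1) → ℝ),
      ‖a‖ ≤ s → ‖b‖ ≤ s → ‖ftil 0 ya k‖ ≤ s → ‖ftil 0 yb k‖ ≤ s →
      ‖(ftil a ya k - Atil.mulVec a) - (ftil b yb k - Atil.mulVec b)‖
        ≤ K₁ * ‖a - b‖ + K₂ * ‖ftil 0 ya k - ftil 0 yb k‖)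
    -- ‖f̃(0, ŷ(k), k)‖_∞ ≤ s for all k
    (hfbnd : ∀ k : ℤ, ‖ftil 0 (yhat k) k‖ ≤ s)
    -- two consecutive iterates lie in the s-ball
    (ηm ηm1 ηm2 : ℤ → (Fin ns ⊕ Fin nu → ℝ))
    (hηmsum : Summable fun k : ℤ => ‖ηm k‖)
    (hηm : (∑' k : ℤ, ‖ηm k‖) ≤ s)
    (hηm1sum : Summable fun k : ℤ => ‖ηm1 k‖)
    (hηm1bnd : (∑' k : ℤ, ‖ηm1 k‖) ≤ s)
    -- the relevant Picard-update series converge absolutely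
    (habs1 : ∀ k : ℤ, Summable fun j : ℤ => ‖(stabPhi As Au (k - j)).mulVec
        (ftil (ηm (j-1)) (yhat (j-1)) (j-1) - Atil.mulVec (ηm (j-1)))‖)
    (habs2 : ∀ k : ℤ, Summable fun j : ℤ => ‖(stabPhi As Au (k - j)).mulVec
        (ftil (ηm1 (j-1)) (yhat (j-1)) (j-1) - Atil.mulVec (ηm1 (j-1)))‖)
    -- the Picard updates
    (hηm1 : ∀ k : ℤ, ηm1 k = ∑' j : ℤ, (stabPhi As Au (k - j)).mulVec
        (ftil (ηm (j-1)) (yhat (j-1)) (j-1) - Atil.mulVec (ηm (j-1))))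
    (hηm2 : ∀ k : ℤ, ηm2 k = ∑' j : ℤ, (stabPhi As Au (k - j)).mulVec
        (ftil (ηm1 (j-1)) (yhat (j-1)) (j-1) - Atil.mulVec (ηm1 (j-1)))) :
    (Summable fun k : ℤ => ‖ηm2 k - ηm1 k‖) ∧
    (∑' k : ℤ, ‖ηm2 k - ηm1 k‖)
      ≤ (∑' k : ℤ, rowSumNorm (stabPhi As Au k)) * K₁ * (∑' k : ℤ, ‖ηm1 k - ηm k‖) :=
  picard_differences_contract_general ns nu μ As Au Atil ftil yhat s K₁ K₂ hφsum hLAL hfbnd ηm ηm1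
    ηm2 hηmsum hηm hηm1sum hηm1bnd habs1 habs2 hηm1 hηm2
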